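/- Let A be a (not necessarily unital) C*-algebra over ℂ. If I and J are closed two-sided ideals of A with I ∩ J = {0} and the closure of I + J equal to A, then J = ann(I) and ann(ann(I)) = I, where ann(I) = {a ∈ A : a x = 0 and x a = 0 for all x ∈ I}. -/

import Mathlib

/-!
Closed ideals of a C⋆-algebra are self-adjoint: `x` is the limit of `x x⋆ · h_δ(x x⋆) x` as
`δ → 0`, where `t ↦ t h_δ(t) = t² / (δ² + t²)` tends to `1` away from `0`, and for `x = a⋆` with
`a ∈ I` these elements lie in `I`. Then `J ⊆ ann(I)` because `I J ⊆ I ∩ J = 0`, and conversely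
if `c ∈ ann(I)` and `i ∈ I` then `c i⋆ = 0`, so `‖c‖² = ‖c (c - i)⋆‖ ≤ ‖c‖ ‖c - i‖`. Approximating
`a ∈ ann(I)` by `i + j` and applying this to `c = a - j` puts `a` in the closure of `J`.
The second identity is the first with `I` and `J` exchanged.
-/

/-- The annihilator of a subset of a ring:
`ann(I) = {a ∈ A : a x = 0 and x a = 0 for all x ∈ I}`. -/
def annSet {A : Type*} [NonUnitalRing A] (I : Set A) : Set A :=
  {a | ∀ x ∈ I, a * x = 0 ∧ x * a = 0}

open scoped Pointwise

lemma sub_mem_annSet {A : Type*} [NonUnitalRing A] {S : Set A} {a b : A} (ha : a ∈ annSet S)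
    (hb : b ∈ annSet S) : a - b ∈ annSet S := fun x hx => by
  simp [sub_mul, mul_sub, (ha x hx).1, (ha x hx).2, (hb x hx).1, (hb x hx).2]

lemma TwoSidedIdeal.coe_subset_annSet {A : Type*} [NonUnitalRing A] {I J : TwoSidedIdeal A}
    (hIJ : (I : Set A) ∩ J = {0}) : (J : Set A) ⊆ annSet I :=
  fun j hj x hx => by
    have hxj : x * j ∈ (I : Set A) ∩ J := ⟨I.mul_mem_right _ _ hx, J.mul_mem_left _ _ hj⟩
    have hjx : j * x ∈ (I : Set A) ∩ J := ⟨I.mul_mem_left _ _ hx, J.mul_mem_right _ _ hj⟩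
    rw [hIJ] at hxj hjx
    exact ⟨hjx, hxj⟩

lemma norm_le_norm_sub_of_mem_annSet {A : Type*} [NonUnitalNormedRing A] [StarRing A]
    [CStarRing A] {S : Set A} {c i : A} (hc : c ∈ annSet S) (hi : star i ∈ S) : ‖c‖ ≤ ‖c - i‖ := by
  have h : ‖c‖ * ‖c‖ ≤ ‖c‖ * ‖c - i‖ :=
    calc ‖c‖ * ‖c‖ = ‖c * star (c - i)‖ := by
          rw [star_sub, mul_sub, (hc _ hi).1, sub_zero, CStarRing.norm_self_mul_star]
      _ ≤ ‖c‖ * ‖c - i‖ := by rw [← norm_star (c - i)]; exact norm_mul_le _ _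
  rcases (norm_nonneg c).eq_or_lt with hc0 | hc0
  · exact hc0 ▸ norm_nonneg _
  · exact le_of_mul_le_mul_left h hc0

section CStarAlgebra

variable {A : Type*} [NonUnitalCStarAlgebra A]

lemma sub_cfcₙ_mul_mul_star (x : A) {g : ℝ → ℝ}
    (hg : ContinuousOn g (quasispectrum ℝ (x * star x))) (hg0 : g 0 = 0) :
    (x - cfcₙ g (x * star x) * x) * star (x - cfcₙ g (x * star x) * x) =
      cfcₙ (fun t => (1 - g t) ^ 2 * t) (x * star x) := by
  set b := x * star x
  have hG : star (cfcₙ g b) = cfcₙ g b := (cfcₙ_predicate g b).star_eq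
  calc (x - cfcₙ g b * x) * star (x - cfcₙ g b * x)
      = b - b * cfcₙ g b - cfcₙ g b * b + cfcₙ g b * b * cfcₙ g b := by
        simp only [star_sub, star_mul, hG, b]; noncomm_ring
    _ = cfcₙ (fun t => t - t * g t - g t * t + g t * t * g t) b := by
        rw [cfcₙ_add .., cfcₙ_sub .., cfcₙ_sub .., cfcₙ_mul .., cfcₙ_mul .., cfcₙ_mul ..,
          cfcₙ_mul .., cfcₙ_id' ℝ b]
    _ = cfcₙ (fun t => (1 - g t) ^ 2 * t) b := cfcₙ_congr fun t _ => by ring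

lemma norm_sub_cfcₙ_mul_sq_le (x : A) {δ : ℝ} (hδ : 0 < δ) :
    ‖x - cfcₙ (fun t => t * (t / (δ ^ 2 + t ^ 2))) (x * star x) * x‖ ^ 2 ≤ δ / 2 := by
  have hD (t : ℝ) : 0 < δ ^ 2 + t ^ 2 := by positivity
  rw [sq, ← CStarRing.norm_self_mul_star,
    sub_cfcₙ_mul_mul_star _
      (Continuous.continuousOn (by fun_prop (disch := exact fun t => (hD t).ne'))) (by simp)]
  refine norm_cfcₙ_le fun t _ => ?_
  have h : (1 - t * (t / (δ ^ 2 + t ^ 2))) ^ 2 * t = δ ^ 4 * t / (δ ^ 2 + t ^ 2) ^ 2 := by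
    field_simp [(hD t).ne']; ring
  rw [Real.norm_eq_abs, h, abs_div, abs_mul, abs_of_pos (by positivity : (0 : ℝ) < δ ^ 4),
    abs_of_pos (by positivity : (0 : ℝ) < (δ ^ 2 + t ^ 2) ^ 2), div_le_iff₀ (by positivity)]
  have amgm : 2 * δ * |t| ≤ δ ^ 2 + t ^ 2 := by nlinarith [sq_nonneg (δ - |t|), sq_abs t]
  have key : 2 * δ * |t| * δ ^ 2 ≤ (δ ^ 2 + t ^ 2) * (δ ^ 2 + t ^ 2) :=
    mul_le_mul amgm (le_add_of_nonneg_right (sq_nonneg t)) (by positivity) (hD t).le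
  nlinarith [mul_le_mul_of_nonneg_left key (by positivity : (0 : ℝ) ≤ δ / 2)]

lemma mem_closure_range_mul_star_mul (x : A) :
    x ∈ closure (Set.range (x * star x * ·)) := by
  refine Metric.mem_closure_iff.2 fun ε hε => ?_
  set h : ℝ → ℝ := fun t => t / ((ε ^ 2) ^ 2 + t ^ 2)
  refine ⟨_, ⟨cfcₙ h (x * star x) * x, rfl⟩, ?_⟩
  have hmul : cfcₙ (fun t => t * h t) (x * star x) = x * star x * cfcₙ h (x * star x) := by
    rw [cfcₙ_mul (fun t => t) h (x * star x)
      (hg := Continuous.continuousOn (by fun_prop (disch := exact fun t => by positivity)))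
      (hg0 := by simp [h]), cfcₙ_id' ℝ (x * star x)]
  dsimp only
  rw [dist_eq_norm, ← mul_assoc, ← hmul, ← pow_lt_pow_iff_left₀ (norm_nonneg _) hε.le two_ne_zero]
  exact (norm_sub_cfcₙ_mul_sq_le x (by positivity)).trans_lt (by linarith [sq_pos_of_pos hε])

lemma TwoSidedIdeal.star_mem_of_isClosed {I : TwoSidedIdeal A} (hI : IsClosed (I : Set A))
    {a : A} (ha : a ∈ I) : star a ∈ I := by
  refine closure_minimal ?_ hI (mem_closure_range_mul_star_mul (star a))
  rintro _ ⟨y, rfl⟩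
  rw [star_star]
  exact I.mul_mem_right _ _ (I.mul_mem_left _ _ ha)

end CStarAlgebra

namespace TwoSidedIdeal

variable {A : Type*} [NonUnitalCStarAlgebra A] {I J : TwoSidedIdeal A}

lemma coe_eq_annSet (hI : IsClosed (I : Set A)) (hJ : IsClosed (J : Set A))
    (hIJ : (I : Set A) ∩ J = {0}) (hdense : Dense ((I : Set A) + (J : Set A))) :
    (J : Set A) = annSet I := by
  have hJI := coe_subset_annSet hIJ
  refine hJI.antisymm fun a ha => hJ.closure_subset (Metric.mem_closure_iff.2 fun ε hε => ?_)
  obtain ⟨_, ⟨i, hi, j, hj, rfl⟩, hdist⟩ := Metric.mem_closure_iff.1 (hdense a) ε hε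
  refine ⟨j, hj, ?_⟩
  calc dist a j = ‖a - j‖ := dist_eq_norm a j
    _ ≤ ‖a - j - i‖ :=
      norm_le_norm_sub_of_mem_annSet (sub_mem_annSet ha (hJI hj)) (star_mem_of_isClosed hI hi)
    _ = dist a (i + j) := by rw [dist_eq_norm, sub_sub, add_comm j]
    _ < ε := hdist

end TwoSidedIdeal

/-- In a (not necessarily unital) C*-algebra, if closed two-sided ideals
satisfy `I ∩ J = {0}` and `cl(I + J) = A`, then `J = ann(I)` and
`ann(ann(I)) = I`. -/
theorem cstar_complemented_closed_ideal_is_annihilator {A : Type*}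
    [NonUnitalCStarAlgebra A]
    (I J : TwoSidedIdeal A)
    (hI : IsClosed (I : Set A)) (hJ : IsClosed (J : Set A))
    (hmeet : (I : Set A) ∩ (J : Set A) = {0})
    (hjoin : closure {x : A | ∃ a ∈ I, ∃ b ∈ J, x = a + b} = Set.univ) :
    (J : Set A) = annSet (I : Set A) ∧
      annSet (annSet (I : Set A)) = (I : Set A) := by
  have hdense : Dense ((I : Set A) + (J : Set A)) := by
    rw [dense_iff_closure_eq, ← hjoin]
    congr 1
    ext x
    simp [Set.mem_add, eq_comm]
  have hJ_eq := TwoSidedIdeal.coe_eq_annSet hI hJ hmeet hdense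
  have hI_eq := TwoSidedIdeal.coe_eq_annSet hJ hI (by rwa [Set.inter_comm]) (by rwa [add_comm])
  exact ⟨hJ_eq, by rw [← hJ_eq, hI_eq]⟩
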